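/- arXiv:math/0006019 — 5 statements merged into one kernel-verified Lean document; each statement's English description precedes it below -/
import Mathlib

section
/- Let (A, ρ, D, U) be an oriented quantum algebra over k. Then (A, ρ, id_A, D∘U) is a standard oriented quantum algebra; that is: D∘U is a k-algebra automorphism of A with ((D∘U) ⊗ (D∘U))(ρ) = ρ, and the images in A ⊗ A^op of (1 ⊗ (D∘U))(ρ) and of ρ⁻¹ are mutually inverse, i.e. [(1 ⊗ DU)(ρ)]·[ρ⁻¹] = 1 = [ρ⁻¹]·[(1 ⊗ DU)(ρ)] in A ⊗ A^op. -/
open TensorProduct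

variable {k A : Type*} [CommRing k] [Ring A] [Algebra k A]

/-- The canonical `k`-linear map `A ⊗ A → A ⊗ Aᵐᵒᵖ`. -/
noncomputable def toOp : A ⊗[k] A →ₗ[k] A ⊗[k] Aᵐᵒᵖ :=
  TensorProduct.map LinearMap.id (MulOpposite.opLinearEquiv k).toLinearMap


lemma psi_toOp {k A : Type*} [CommRing k] [Ring A] [Algebra k A]
    (f : A →ₐ[k] A) (x : A ⊗[k] A) :
    Algebra.TensorProduct.map f (AlgHom.id k Aᵐᵒᵖ) (toOp x) =
      toOp (Algebra.TensorProduct.map f (AlgHom.id k A) x) := by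
  induction x using TensorProduct.induction_on with
  | zero => simp
  | tmul a b => rfl
  | add x y hx hy => simp [map_add, hx, hy]

/-- If `(A, ρ, D, U)` is an oriented quantum algebra over `k`, then
`(A, ρ, id, D ∘ U)` is a standard oriented quantum algebra. -/
theorem statement0
    (ρ ρinv : A ⊗[k] A)
    (hρ : ρ * ρinv = 1) (hρ' : ρinv * ρ = 1)
    (hYB :
      Algebra.TensorProduct.map (AlgHom.id k A)
          (Algebra.TensorProduct.includeLeft : A →ₐ[k] A ⊗[k] A) ρ *
        Algebra.TensorProduct.map (AlgHom.id k A)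
          (Algebra.TensorProduct.includeRight : A →ₐ[k] A ⊗[k] A) ρ *
        (Algebra.TensorProduct.includeRight : (A ⊗[k] A) →ₐ[k] A ⊗[k] (A ⊗[k] A)) ρ =
      (Algebra.TensorProduct.includeRight : (A ⊗[k] A) →ₐ[k] A ⊗[k] (A ⊗[k] A)) ρ *
        Algebra.TensorProduct.map (AlgHom.id k A)
          (Algebra.TensorProduct.includeRight : A →ₐ[k] A ⊗[k] A) ρ *
        Algebra.TensorProduct.map (AlgHom.id k A)
          (Algebra.TensorProduct.includeLeft : A →ₐ[k] A ⊗[k] A) ρ)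
    (U D : A ≃ₐ[k] A)
    (hcomm : ∀ a : A, D (U a) = U (D a))
    (hU : Algebra.TensorProduct.map U.toAlgHom U.toAlgHom ρ = ρ)
    (hD : Algebra.TensorProduct.map D.toAlgHom D.toAlgHom ρ = ρ)
    (hinv1 : toOp (Algebra.TensorProduct.map (AlgHom.id k A) U.toAlgHom ρ) *
        toOp (Algebra.TensorProduct.map D.toAlgHom (AlgHom.id k A) ρinv) = 1)
    (hinv2 : toOp (Algebra.TensorProduct.map D.toAlgHom (AlgHom.id k A) ρinv) *
        toOp (Algebra.TensorProduct.map (AlgHom.id k A) U.toAlgHom ρ) = 1) :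
    Algebra.TensorProduct.map (U.trans D).toAlgHom (U.trans D).toAlgHom ρ = ρ ∧
    toOp (Algebra.TensorProduct.map (AlgHom.id k A) (U.trans D).toAlgHom ρ) * toOp ρinv = 1 ∧
    toOp ρinv * toOp (Algebra.TensorProduct.map (AlgHom.id k A) (U.trans D).toAlgHom ρ) = 1 := by
  have hDU : (U.trans D).toAlgHom = D.toAlgHom.comp U.toAlgHom := rfl
  have hUD : U.toAlgHom.comp D.toAlgHom = (U.trans D).toAlgHom := by
    ext a; exact (hcomm a).symm
  have cDD : D.symm.toAlgHom.comp D.toAlgHom = AlgHom.id k A :=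
    AlgHom.ext fun a => D.symm_apply_apply a
  have part1 : Algebra.TensorProduct.map (U.trans D).toAlgHom (U.trans D).toAlgHom ρ = ρ := by
    rw [hDU, Algebra.TensorProduct.map_comp, AlgHom.comp_apply, hU, hD]
  have key : Algebra.TensorProduct.map (AlgHom.id k A) (U.trans D).toAlgHom ρ =
      Algebra.TensorProduct.map D.symm.toAlgHom (AlgHom.id k A)
        (Algebra.TensorProduct.map (AlgHom.id k A) U.toAlgHom ρ) := by
    conv_rhs => rw [← AlgHom.comp_apply, ← Algebra.TensorProduct.map_comp, AlgHom.comp_id,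
      AlgHom.id_comp, ← hD, ← AlgHom.comp_apply, ← Algebra.TensorProduct.map_comp, cDD, hUD]
  have key2 : Algebra.TensorProduct.map D.symm.toAlgHom (AlgHom.id k A)
      (Algebra.TensorProduct.map D.toAlgHom (AlgHom.id k A) ρinv) = ρinv := by
    rw [← AlgHom.comp_apply, ← Algebra.TensorProduct.map_comp, cDD, AlgHom.id_comp,
      Algebra.TensorProduct.map_id, AlgHom.coe_id, id_eq]
  refine ⟨part1, ?_, ?_⟩
  · rw [key, ← key2, ← psi_toOp D.symm.toAlgHom, ← psi_toOp D.symm.toAlgHom, ← map_mul, hinv1, map_one]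
  · rw [key, ← key2, ← psi_toOp D.symm.toAlgHom, ← psi_toOp D.symm.toAlgHom, ← map_mul, hinv2, map_one]
end

section
/- Let A be an associative unital k-algebra, let ρ be an invertible element of A ⊗ A satisfying the algebraic Yang–Baxter equation ρ₁₂ρ₁₃ρ₂₃ = ρ₂₃ρ₁₃ρ₁₂, and let s be a bijective k-linear anti-automorphism of A (s(xy) = s(y)s(x), s(1) = 1) such that (s ⊗ s)(ρ) = ρ and (s ⊗ 1)(ρ) = ρ⁻¹. Then (A, ρ, id_A, s⁻²) is a standard oriented quantum algebra: s⁻² = s⁻¹∘s⁻¹ is a k-algebra automorphism of A with (s⁻² ⊗ s⁻²)(ρ) = ρ, and the images in A ⊗ A^op of (1 ⊗ s⁻²)(ρ) and of ρ⁻¹ are mutually inverse, i.e. [(1 ⊗ s⁻²)(ρ)]·[ρ⁻¹] = 1 = [ρ⁻¹]·[(1 ⊗ s⁻²)(ρ)] in A ⊗ A^op. -/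
open TensorProduct

variable {k A : Type*} [CommRing k] [Ring A] [Algebra k A]

/-- if `ρ` is an invertible solution of the algebraic Yang–Baxter equation and
`s` is a bijective `k`-linear anti-automorphism of `A` with `(s ⊗ s)ρ = ρ` and
`(s ⊗ 1)ρ = ρ⁻¹`, then `(A, ρ, id, s⁻²)` is a standard oriented quantum algebra. -/
theorem statement1
    (ρ ρinv : A ⊗[k] A)
    (hρ : ρ * ρinv = 1) (hρ' : ρinv * ρ = 1)
    (hYB :
      Algebra.TensorProduct.map (AlgHom.id k A)
          (Algebra.TensorProduct.includeLeft : A →ₐ[k] A ⊗[k] A) ρ *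
        Algebra.TensorProduct.map (AlgHom.id k A)
          (Algebra.TensorProduct.includeRight : A →ₐ[k] A ⊗[k] A) ρ *
        (Algebra.TensorProduct.includeRight : (A ⊗[k] A) →ₐ[k] A ⊗[k] (A ⊗[k] A)) ρ =
      (Algebra.TensorProduct.includeRight : (A ⊗[k] A) →ₐ[k] A ⊗[k] (A ⊗[k] A)) ρ *
        Algebra.TensorProduct.map (AlgHom.id k A)
          (Algebra.TensorProduct.includeRight : A →ₐ[k] A ⊗[k] A) ρ *
        Algebra.TensorProduct.map (AlgHom.id k A)
          (Algebra.TensorProduct.includeLeft : A →ₐ[k] A ⊗[k] A) ρ)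
    (s : A ≃ₗ[k] A)
    (hs_mul : ∀ x y : A, s (x * y) = s y * s x)
    (hs_one : s 1 = 1)
    (hss : TensorProduct.map s.toLinearMap s.toLinearMap ρ = ρ)
    (hs1 : TensorProduct.map s.toLinearMap LinearMap.id ρ = ρinv) :
    (∀ x y : A, (s.symm.trans s.symm) (x * y) =
        (s.symm.trans s.symm) x * (s.symm.trans s.symm) y) ∧
    (s.symm.trans s.symm) 1 = 1 ∧
    TensorProduct.map (s.symm.trans s.symm).toLinearMap (s.symm.trans s.symm).toLinearMap ρ = ρ ∧
    toOp (TensorProduct.map LinearMap.id (s.symm.trans s.symm).toLinearMap ρ) * toOp ρinv = 1 ∧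
    toOp ρinv * toOp (TensorProduct.map LinearMap.id (s.symm.trans s.symm).toLinearMap ρ) = 1 := by
  have hsymm_mul : ∀ x y : A, s.symm (x * y) = s.symm y * s.symm x := by
    intro x y
    apply s.injective
    rw [s.apply_symm_apply, hs_mul, s.apply_symm_apply, s.apply_symm_apply]
  have hsymm_one : s.symm (1 : A) = 1 := by
    apply s.injective; rw [s.apply_symm_apply, hs_one]
  have hcomp : (s.symm.toLinearMap ∘ₗ s.toLinearMap) = LinearMap.id := by
    ext x; simp
  have hcomp' : (s.toLinearMap ∘ₗ s.symm.toLinearMap) = LinearMap.id := by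
    ext x; simp
  -- (s⁻¹ ⊗ s⁻¹) ρ = ρ
  have hss' : TensorProduct.map s.symm.toLinearMap s.symm.toLinearMap ρ = ρ := by
    conv_lhs => rw [← hss]
    rw [← LinearMap.comp_apply, ← TensorProduct.map_comp, hcomp, TensorProduct.map_id,
      LinearMap.id_apply]
  -- (1 ⊗ s⁻¹) ρ = ρinv
  have hE1 : TensorProduct.map LinearMap.id s.symm.toLinearMap ρ = ρinv := by
    conv_lhs => rw [← hss]
    rw [← LinearMap.comp_apply, ← TensorProduct.map_comp, hcomp, LinearMap.id_comp, hs1]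
  -- (1 ⊗ s) ρinv = ρ
  have hE2 : TensorProduct.map LinearMap.id s.toLinearMap ρinv = ρ := by
    rw [← hE1, ← LinearMap.comp_apply, ← TensorProduct.map_comp, hcomp',
      LinearMap.id_comp, TensorProduct.map_id, LinearMap.id_apply]
  set Ψ : A ⊗[k] A →ₗ[k] A ⊗[k] Aᵐᵒᵖ :=
    TensorProduct.map LinearMap.id
      ((MulOpposite.opLinearEquiv k).toLinearMap ∘ₗ s.symm.toLinearMap) with hΨ
  have C1 : ∀ u v : A ⊗[k] A,
      toOp (TensorProduct.map LinearMap.id s.symm.toLinearMap u) * toOp v =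
        Ψ (u * TensorProduct.map LinearMap.id s.toLinearMap v) := by
    intro u v
    induction u using TensorProduct.induction_on with
    | zero => simp
    | add x y hx hy => simp only [map_add, add_mul, hx, hy]
    | tmul a b =>
      induction v using TensorProduct.induction_on with
      | zero => simp
      | add x y hx hy => simp only [map_add, mul_add, hx, hy]
      | tmul c d =>
        simp only [toOp, TensorProduct.map_tmul, LinearMap.id_coe, id_eq,
          LinearMap.coe_comp, Function.comp_apply, LinearEquiv.coe_coe,
          MulOpposite.coe_opLinearEquiv, Algebra.TensorProduct.tmul_mul_tmul,
          ← MulOpposite.op_mul, hsymm_mul, s.symm_apply_apply, hΨ]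
  have C2 : ∀ u v : A ⊗[k] A,
      toOp u * toOp (TensorProduct.map LinearMap.id s.symm.toLinearMap v) =
        Ψ (TensorProduct.map LinearMap.id s.toLinearMap u * v) := by
    intro u v
    induction u using TensorProduct.induction_on with
    | zero => simp
    | add x y hx hy => simp only [map_add, add_mul, hx, hy]
    | tmul a b =>
      induction v using TensorProduct.induction_on with
      | zero => simp
      | add x y hx hy => simp only [map_add, mul_add, hx, hy]
      | tmul c d =>
        simp only [toOp, TensorProduct.map_tmul, LinearMap.id_coe, id_eq,
          LinearMap.coe_comp, Function.comp_apply, LinearEquiv.coe_coe,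
          MulOpposite.coe_opLinearEquiv, Algebra.TensorProduct.tmul_mul_tmul,
          ← MulOpposite.op_mul, hsymm_mul, s.symm_apply_apply, hΨ]
  have hTρinv : TensorProduct.map LinearMap.id (s.symm.trans s.symm).toLinearMap ρ =
      TensorProduct.map LinearMap.id s.symm.toLinearMap ρinv := by
    rw [← hE1, ← LinearMap.comp_apply, ← TensorProduct.map_comp, LinearMap.id_comp]
    rfl
  have hΨone : Ψ 1 = 1 := by
    rw [hΨ, Algebra.TensorProduct.one_def, TensorProduct.map_tmul]
    simp [hsymm_one, Algebra.TensorProduct.one_def]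
  refine ⟨?_, ?_, ?_, ?_, ?_⟩
  · intro x y
    simp only [LinearEquiv.trans_apply, hsymm_mul]
  · simp [LinearEquiv.trans_apply, hsymm_one]
  · have : (s.symm.trans s.symm).toLinearMap = s.symm.toLinearMap ∘ₗ s.symm.toLinearMap := rfl
    rw [this, TensorProduct.map_comp, LinearMap.comp_apply, hss', hss']
  · rw [hTρinv, C1 ρinv ρinv, hE2, hρ', hΨone]
  · rw [hTρinv, C2 ρinv ρinv, hE2, hρ, hΨone]
end

section
/- Let A be an associative unital k-algebra, let ρ be an invertible element of A ⊗ A, and let s be a bijective k-linear anti-automorphism of A (s(xy) = s(y)s(x), s(1) = 1) such that (s ⊗ s)(ρ) = ρ and (s ⊗ 1)(ρ) = ρ⁻¹. Then in A ⊗ A^op the product of (the image of) ρ⁻¹ with (the image of) (s² ⊗ 1)(ρ) equals 1; in signifier notation, writing ρ = Σ e ⊗ e' and ρ = Σ f ⊗ f' for two copies of ρ, this says Σ s(f)s²(e) ⊗ e'f' = 1 ⊗ 1. -/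
open TensorProduct

variable {k A : Type*} [CommRing k] [Ring A] [Algebra k A]

lemma psi_antimul (s : A ≃ₗ[k] A)
    (hs_mul : ∀ x y : A, s (x * y) = s y * s x)
    (a b : A ⊗[k] A) :
    toOp (TensorProduct.map s.toLinearMap LinearMap.id (a * b)) =
      toOp (TensorProduct.map s.toLinearMap LinearMap.id b) *
        toOp (TensorProduct.map s.toLinearMap LinearMap.id a) := by
  induction a using TensorProduct.induction_on with
  | zero => simp
  | add a₁ a₂ h₁ h₂ => simp [add_mul, mul_add, h₁, h₂]
  | tmul x y =>
    induction b using TensorProduct.induction_on with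
    | zero => simp
    | add b₁ b₂ h₁ h₂ => simp [add_mul, mul_add, h₁, h₂]
    | tmul x' y' =>
      simp [toOp, Algebra.TensorProduct.tmul_mul_tmul, hs_mul,
        ← MulOpposite.op_mul]

/-- with `s` a bijective `k`-linear anti-automorphism of `A` satisfying
`(s ⊗ s)ρ = ρ` and `(s ⊗ 1)ρ = ρ⁻¹`, the product in `A ⊗ Aᵐᵒᵖ` of the image of `ρ⁻¹`
with the image of `(s² ⊗ 1)ρ` equals `1` (i.e. `Σ s(f)s²(e) ⊗ e'f' = 1 ⊗ 1`). -/
theorem statement2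
    (ρ ρinv : A ⊗[k] A)
    (hρ : ρ * ρinv = 1) (hρ' : ρinv * ρ = 1)
    (s : A ≃ₗ[k] A)
    (hs_mul : ∀ x y : A, s (x * y) = s y * s x)
    (hs_one : s 1 = 1)
    (hss : TensorProduct.map s.toLinearMap s.toLinearMap ρ = ρ)
    (hs1 : TensorProduct.map s.toLinearMap LinearMap.id ρ = ρinv) :
    toOp ρinv *
      toOp (TensorProduct.map (s.toLinearMap ∘ₗ s.toLinearMap) LinearMap.id ρ) = 1 := by
  have hcomp : TensorProduct.map (s.toLinearMap ∘ₗ s.toLinearMap) (LinearMap.id : A →ₗ[k] A) =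
      (TensorProduct.map s.toLinearMap LinearMap.id) ∘ₗ
        (TensorProduct.map s.toLinearMap LinearMap.id) := by
    rw [← TensorProduct.map_comp]; rfl
  have key := psi_antimul s hs_mul ρinv ρ
  rw [hρ', hs1] at key
  rw [hcomp, LinearMap.comp_apply, hs1, ← key]
  have h1 : ((1 : A ⊗[k] A)) = (1 : A) ⊗ₜ[k] (1 : A) := rfl
  rw [h1]
  simp [toOp, hs_one]
  rfl
end

section
/- The explicit element ρ of M_N(k) ⊗ M_N(k) defined below satisfies the algebraic Yang–Baxter equation ρ₁₂ρ₁₃ρ₂₃ = ρ₂₃ρ₁₃ρ₁₂ in M_N(k) ⊗ M_N(k) ⊗ M_N(k), where ρᵢⱼ denotes ρ placed in tensor factors i and j with the identity matrix in the remaining factor. -/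
open TensorProduct

/-- The elementary matrix `E^a_b`. -/
noncomputable def Emat (k : Type*) [CommRing k] (N : ℕ) (a b : Fin N) :
    Matrix (Fin N) (Fin N) k :=
  Matrix.single a b 1

/-- `ρ = z Σ_{a>b} E^a_b ⊗ E^b_a + q Σ_a E^a_a ⊗ E^a_a + Σ_{a≠b} E^a_a ⊗ E^b_b`. -/
noncomputable def rhoElt (k : Type*) [CommRing k] (N : ℕ) (q : kˣ) :
    Matrix (Fin N) (Fin N) k ⊗[k] Matrix (Fin N) (Fin N) k :=
  ((q : k) - ((q⁻¹ : kˣ) : k)) •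
      (∑ a : Fin N, ∑ b : Fin N, if b < a then Emat k N a b ⊗ₜ[k] Emat k N b a else 0) +
    (q : k) • (∑ a : Fin N, Emat k N a a ⊗ₜ[k] Emat k N a a) +
    ∑ a : Fin N, ∑ b : Fin N, if a ≠ b then Emat k N a a ⊗ₜ[k] Emat k N b b else 0

/-!
Under the Kronecker isomorphism `M_N(k) ⊗ M_N(k) ⊗ M_N(k) ≃ M_{N × N × N}(k)` the legs `ρ₁₂`,
`ρ₁₃`, `ρ₂₃` become the matrices with entries `ρ^{a₁a₂}_{b₁b₂} δ^{a₃}_{b₃}`, etc., so the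
Yang–Baxter equation is the component identity
`∑ ρ^{a₁a₂}_{xy} ρ^{x a₃}_{b₁u} ρ^{yu}_{b₂b₃} = ∑ ρ^{a₂a₃}_{yu} ρ^{a₁u}_{x b₃} ρ^{xy}_{b₁b₂}`.
Since `ρ^{ab}_{cd} = 0` unless `{c, d} = {a, b}`, at most two terms survive each summation, and
what is left depends only on the relative order of `a₁, a₂, a₃`. In each of the thirteen
configurations it is a polynomial identity in `q` and `z` that holds modulo `q z = q² - 1`.
-/

section

variable {k : Type*} [CommRing k]

section Coefficients

variable {ι : Type*} [LinearOrder ι] [Fintype ι]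

/-- `rhoCoeff q (q - q⁻¹) a b c d` is the coefficient `ρ^{ab}_{cd}` of `E^a_c ⊗ E^b_d` in `ρ`. -/
def rhoCoeff (q z : k) (a b c d : ι) : k :=
  (if c = b ∧ d = a ∧ b < a then z else 0) +
    (if c = a ∧ d = b then (if a = b then q else 1) else 0)

variable (q z : k)

theorem sum_rhoCoeff_mul_snd (a b c : ι) (g : ι → k) :
    ∑ d, rhoCoeff q z a b c d * g d =
      (if c = b ∧ b < a then z * g a else 0) +
        (if c = a then (if a = b then q else 1) * g b else 0) := by
  simp only [rhoCoeff, add_mul, ite_mul, zero_mul, one_mul, Finset.sum_add_distrib, ite_and]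
  simp

theorem sum_rhoCoeff_mul_fst (a b d : ι) (g : ι → k) :
    ∑ c, rhoCoeff q z a b c d * g c =
      (if d = a ∧ b < a then z * g b else 0) +
        (if d = b then (if a = b then q else 1) * g a else 0) := by
  simp only [rhoCoeff, add_mul, ite_mul, zero_mul, one_mul, Finset.sum_add_distrib, ite_and]
  simp

theorem rhoCoeff_yangBaxter (hqz : q * z = q ^ 2 - 1) (a₁ a₂ a₃ b₁ b₂ b₃ : ι) :
    ∑ x, ∑ y, ∑ u, rhoCoeff q z a₁ a₂ x y * rhoCoeff q z x a₃ b₁ u * rhoCoeff q z y u b₂ b₃ =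
      ∑ x, ∑ y, ∑ u, rhoCoeff q z a₂ a₃ y u * rhoCoeff q z a₁ u x b₃ * rhoCoeff q z x y b₁ b₂ := by
  conv_rhs => rw [Finset.sum_comm]; enter [2, y]; rw [Finset.sum_comm]
  simp only [mul_assoc, ← Finset.mul_sum, sum_rhoCoeff_mul_snd, sum_rhoCoeff_mul_fst,
    Finset.sum_add_distrib, ite_and, Finset.sum_ite_eq', Finset.mem_univ, if_true]
  rcases lt_trichotomy a₁ a₂ with h₁₂ | h₁₂ | h₁₂ <;>
  rcases lt_trichotomy a₂ a₃ with h₂₃ | h₂₃ | h₂₃ <;>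
  rcases lt_trichotomy a₁ a₃ with h₁₃ | h₁₃ | h₁₃ <;>
  simp only [rhoCoeff, h₁₂, h₂₃, h₁₃, ne_of_lt, ne_of_gt, not_lt_of_gt, lt_irrefl] <;>
  grind

end Coefficients

section Legs

variable {n : Type*} [Fintype n] [DecidableEq n]

variable (k n) in
noncomputable def kronecker₃ :
    Matrix n n k ⊗[k] (Matrix n n k ⊗[k] Matrix n n k) ≃ₐ[k] Matrix (n × n × n) (n × n × n) k :=
  (Algebra.TensorProduct.congr AlgEquiv.refl (Matrix.kroneckerAlgEquiv n n k)).trans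
    (Matrix.kroneckerAlgEquiv n (n × n) k)

def leg12 (R : Matrix (n × n) (n × n) k) : Matrix (n × n × n) (n × n × n) k :=
  Matrix.of fun p s => R (p.1, p.2.1) (s.1, s.2.1) * (1 : Matrix n n k) p.2.2 s.2.2

def leg13 (R : Matrix (n × n) (n × n) k) : Matrix (n × n × n) (n × n × n) k :=
  Matrix.of fun p s => R (p.1, p.2.2) (s.1, s.2.2) * (1 : Matrix n n k) p.2.1 s.2.1

def leg23 (R : Matrix (n × n) (n × n) k) : Matrix (n × n × n) (n × n × n) k :=
  Matrix.of fun p s => (1 : Matrix n n k) p.1 s.1 * R p.2 s.2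

theorem kronecker₃_tmul (a b c : Matrix n n k) :
    kronecker₃ k n (a ⊗ₜ (b ⊗ₜ c)) = Matrix.kronecker a (Matrix.kronecker b c) := by
  simp [kronecker₃]

theorem kronecker₃_map_includeLeft (x : Matrix n n k ⊗[k] Matrix n n k) :
    kronecker₃ k n (Algebra.TensorProduct.map (AlgHom.id k _)
      (Algebra.TensorProduct.includeLeft : Matrix n n k →ₐ[k] _) x) =
      leg12 (Matrix.kroneckerAlgEquiv n n k x) := by
  induction x using TensorProduct.induction_on with
  | zero => ext; simp [leg12]
  | tmul a b => ext; simp [kronecker₃_tmul, leg12, mul_assoc]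
  | add x y hx hy => simp only [map_add, hx, hy]; ext; simp [leg12, add_mul]

theorem kronecker₃_map_includeRight (x : Matrix n n k ⊗[k] Matrix n n k) :
    kronecker₃ k n (Algebra.TensorProduct.map (AlgHom.id k _)
      (Algebra.TensorProduct.includeRight : Matrix n n k →ₐ[k] _) x) =
      leg13 (Matrix.kroneckerAlgEquiv n n k x) := by
  induction x using TensorProduct.induction_on with
  | zero => ext; simp [leg13]
  | tmul a b => ext; simp [kronecker₃_tmul, leg13]; ring
  | add x y hx hy => simp only [map_add, hx, hy]; ext; simp [leg13, add_mul]

theorem kronecker₃_includeRight (x : Matrix n n k ⊗[k] Matrix n n k) :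
    kronecker₃ k n (Algebra.TensorProduct.includeRight x : Matrix n n k ⊗[k] _) =
      leg23 (Matrix.kroneckerAlgEquiv n n k x) := by
  induction x using TensorProduct.induction_on with
  | zero => ext; simp [leg23]
  | tmul a b => ext; simp [kronecker₃_tmul, leg23]
  | add x y hx hy => simp only [map_add, hx, hy]; ext; simp [leg23, mul_add]

theorem leg12_mul_leg13_mul_leg23 (R : Matrix (n × n) (n × n) k)
    (hR : ∀ a₁ a₂ a₃ b₁ b₂ b₃,
      ∑ x, ∑ y, ∑ u, R (a₁, a₂) (x, y) * R (x, a₃) (b₁, u) * R (y, u) (b₂, b₃) =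
        ∑ x, ∑ y, ∑ u, R (a₂, a₃) (y, u) * R (a₁, u) (x, b₃) * R (x, y) (b₁, b₂)) :
    leg12 R * leg13 R * leg23 R = leg23 R * leg13 R * leg12 R := by
  ext ⟨a₁, a₂, a₃⟩ ⟨b₁, b₂, b₃⟩
  simp only [Matrix.mul_apply, Fintype.sum_prod_type, leg12, leg13, leg23, Matrix.of_apply,
    Matrix.one_apply, mul_ite, ite_mul, mul_one, one_mul, mul_zero, zero_mul, Finset.sum_ite_eq,
    Finset.sum_ite_eq', Finset.mem_univ, if_true, Finset.sum_ite_irrel, Finset.sum_const_zero,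
    Finset.sum_mul]
  rw [← hR]
  exact (Finset.sum_congr rfl fun _ _ => Finset.sum_comm).trans Finset.sum_comm

end Legs

theorem kroneckerAlgEquiv_rhoElt (N : ℕ) (q : kˣ) :
    Matrix.kroneckerAlgEquiv (Fin N) (Fin N) k (rhoElt k N q) =
      Matrix.of fun p s => rhoCoeff (q : k) (q - (q⁻¹ : kˣ)) p.1 p.2 s.1 s.2 := by
  ext ⟨a, b⟩ ⟨c, d⟩
  simp only [rhoElt, Emat, map_add, map_smul, map_sum, map_zero,
    apply_ite (Matrix.kroneckerAlgEquiv (Fin N) (Fin N) k), Matrix.kroneckerAlgEquiv_apply,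
    kroneckerLinearEquiv_tmul, Matrix.add_apply, Matrix.smul_apply, Matrix.sum_apply,
    Matrix.ite_apply, Matrix.single_kronecker_single, Matrix.single_apply, Prod.mk.injEq,
    Matrix.zero_apply, mul_one, Matrix.of_apply, rhoCoeff, ← ite_and]
  -- AC-normalising the conditions puts the equations on the summation variables first.
  simp only [and_comm, and_left_comm, and_assoc]
  simp only [ite_and, Finset.sum_ite_irrel, Finset.sum_const_zero, Finset.sum_ite_eq',
    Finset.mem_univ, if_true, smul_eq_mul]
  grind

end

theorem statement6_general (k : Type*) [CommRing k] (N : ℕ) (q : kˣ) :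
    Algebra.TensorProduct.map (AlgHom.id k (Matrix (Fin N) (Fin N) k))
        (Algebra.TensorProduct.includeLeft :
          Matrix (Fin N) (Fin N) k →ₐ[k] Matrix (Fin N) (Fin N) k ⊗[k] Matrix (Fin N) (Fin N) k)
        (rhoElt k N q) *
      Algebra.TensorProduct.map (AlgHom.id k (Matrix (Fin N) (Fin N) k))
        (Algebra.TensorProduct.includeRight :
          Matrix (Fin N) (Fin N) k →ₐ[k] Matrix (Fin N) (Fin N) k ⊗[k] Matrix (Fin N) (Fin N) k)
        (rhoElt k N q) *
      (Algebra.TensorProduct.includeRight :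
          (Matrix (Fin N) (Fin N) k ⊗[k] Matrix (Fin N) (Fin N) k) →ₐ[k]
            Matrix (Fin N) (Fin N) k ⊗[k]
              (Matrix (Fin N) (Fin N) k ⊗[k] Matrix (Fin N) (Fin N) k))
        (rhoElt k N q) =
    (Algebra.TensorProduct.includeRight :
          (Matrix (Fin N) (Fin N) k ⊗[k] Matrix (Fin N) (Fin N) k) →ₐ[k]
            Matrix (Fin N) (Fin N) k ⊗[k]
              (Matrix (Fin N) (Fin N) k ⊗[k] Matrix (Fin N) (Fin N) k))
        (rhoElt k N q) *
      Algebra.TensorProduct.map (AlgHom.id k (Matrix (Fin N) (Fin N) k))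
        (Algebra.TensorProduct.includeRight :
          Matrix (Fin N) (Fin N) k →ₐ[k] Matrix (Fin N) (Fin N) k ⊗[k] Matrix (Fin N) (Fin N) k)
        (rhoElt k N q) *
      Algebra.TensorProduct.map (AlgHom.id k (Matrix (Fin N) (Fin N) k))
        (Algebra.TensorProduct.includeLeft :
          Matrix (Fin N) (Fin N) k →ₐ[k] Matrix (Fin N) (Fin N) k ⊗[k] Matrix (Fin N) (Fin N) k)
        (rhoElt k N q) := by
  apply (kronecker₃ k (Fin N)).injective
  simp only [map_mul, kronecker₃_map_includeLeft, kronecker₃_map_includeRight,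
    kronecker₃_includeRight, kroneckerAlgEquiv_rhoElt]
  exact leg12_mul_leg13_mul_leg23 _ (rhoCoeff_yangBaxter _ _ (by rw [mul_sub, Units.mul_inv]; ring))

/-- `ρ` satisfies the algebraic Yang–Baxter equation
`ρ₁₂ρ₁₃ρ₂₃ = ρ₂₃ρ₁₃ρ₁₂` in `M_N(k) ⊗ M_N(k) ⊗ M_N(k)`. -/
theorem statement6 (k : Type*) [CommRing k] (N : ℕ) (hN : 0 < N) (q : kˣ) :
    Algebra.TensorProduct.map (AlgHom.id k (Matrix (Fin N) (Fin N) k))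
        (Algebra.TensorProduct.includeLeft :
          Matrix (Fin N) (Fin N) k →ₐ[k] Matrix (Fin N) (Fin N) k ⊗[k] Matrix (Fin N) (Fin N) k)
        (rhoElt k N q) *
      Algebra.TensorProduct.map (AlgHom.id k (Matrix (Fin N) (Fin N) k))
        (Algebra.TensorProduct.includeRight :
          Matrix (Fin N) (Fin N) k →ₐ[k] Matrix (Fin N) (Fin N) k ⊗[k] Matrix (Fin N) (Fin N) k)
        (rhoElt k N q) *
      (Algebra.TensorProduct.includeRight :
          (Matrix (Fin N) (Fin N) k ⊗[k] Matrix (Fin N) (Fin N) k) →ₐ[k]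
            Matrix (Fin N) (Fin N) k ⊗[k]
              (Matrix (Fin N) (Fin N) k ⊗[k] Matrix (Fin N) (Fin N) k))
        (rhoElt k N q) =
    (Algebra.TensorProduct.includeRight :
          (Matrix (Fin N) (Fin N) k ⊗[k] Matrix (Fin N) (Fin N) k) →ₐ[k]
            Matrix (Fin N) (Fin N) k ⊗[k]
              (Matrix (Fin N) (Fin N) k ⊗[k] Matrix (Fin N) (Fin N) k))
        (rhoElt k N q) *
      Algebra.TensorProduct.map (AlgHom.id k (Matrix (Fin N) (Fin N) k))
        (Algebra.TensorProduct.includeRight :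
          Matrix (Fin N) (Fin N) k →ₐ[k] Matrix (Fin N) (Fin N) k ⊗[k] Matrix (Fin N) (Fin N) k)
        (rhoElt k N q) *
      Algebra.TensorProduct.map (AlgHom.id k (Matrix (Fin N) (Fin N) k))
        (Algebra.TensorProduct.includeLeft :
          Matrix (Fin N) (Fin N) k →ₐ[k] Matrix (Fin N) (Fin N) k ⊗[k] Matrix (Fin N) (Fin N) k)
        (rhoElt k N q) :=
  statement6_general k N q
end

section
/- With the matrices R and S indexed by pairs defined below (the braiding matrix of the Homfly state model and its claimed inverse), R·S = Id = S·R, where the product is matrix multiplication of matrices with rows and columns indexed by {1,…,N}² and Id is the identity matrix. -/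
/-- The braiding matrix `R` of the Homfly state model:
`R^{ab}_{cd} = q·[a=b=c=d] + z·[a=c][b=d][a<b] + [a=d][b=c][a≠b]`. -/
noncomputable def Rbraid (k : Type*) [CommRing k] (N : ℕ) (q : kˣ) :
    Matrix (Fin N × Fin N) (Fin N × Fin N) k :=
  Matrix.of fun p r =>
    (q : k) * (if p.1 = p.2 ∧ p.2 = r.1 ∧ r.1 = r.2 then 1 else 0) +
      ((q : k) - ((q⁻¹ : kˣ) : k)) * (if p.1 = r.1 then 1 else 0) *
        (if p.2 = r.2 then 1 else 0) * (if p.1 < p.2 then 1 else 0) +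
      (if p.1 = r.2 then 1 else 0) * (if p.2 = r.1 then 1 else 0) *
        (if p.1 ≠ p.2 then 1 else 0)

/-- The matrix `S`:
`S^{ab}_{cd} = q⁻¹·[a=b=c=d] + (q⁻¹−q)·[a=c][b=d][a>b] + [a=d][b=c][a≠b]`. -/
noncomputable def Sbraid (k : Type*) [CommRing k] (N : ℕ) (q : kˣ) :
    Matrix (Fin N × Fin N) (Fin N × Fin N) k :=
  Matrix.of fun p r =>
    ((q⁻¹ : kˣ) : k) * (if p.1 = p.2 ∧ p.2 = r.1 ∧ r.1 = r.2 then 1 else 0) +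
      (((q⁻¹ : kˣ) : k) - (q : k)) * (if p.1 = r.1 then 1 else 0) *
        (if p.2 = r.2 then 1 else 0) * (if p.2 < p.1 then 1 else 0) +
      (if p.1 = r.2 then 1 else 0) * (if p.2 = r.1 then 1 else 0) *
        (if p.1 ≠ p.2 then 1 else 0)

private lemma pushlt {k : Type*} [CommRing k] {N : ℕ} (x y u v : Fin N) (A : k) :
    (if x < y then if u = v then A else 0 else 0)
      = if u = v then if x < y then A else 0 else 0 := by
  split_ifs <;> rfl

private lemma pushne {k : Type*} [CommRing k] {N : ℕ} (x y u v : Fin N) (A : k) :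
    (if x ≠ y then if u = v then A else 0 else 0)
      = if u = v then if x ≠ y then A else 0 else 0 := by
  split_ifs <;> rfl

set_option maxHeartbeats 2000000 in
/-- `R·S = Id = S·R`. -/
theorem statement11 (k : Type*) [CommRing k] (N : ℕ) (hN : 0 < N) (q : kˣ) :
    Rbraid k N q * Sbraid k N q = 1 ∧ Sbraid k N q * Rbraid k N q = 1 := by
  have hq : (q : k) * ((q⁻¹ : kˣ) : k) = 1 := q.mul_inv
  constructor <;>
  · ext ⟨a, b⟩ ⟨e, f⟩
    simp only [Matrix.mul_apply, Rbraid, Sbraid, Matrix.of_apply, Matrix.one_apply,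
      Prod.mk.injEq, Fintype.sum_prod_type, add_mul, mul_add, Finset.sum_add_distrib,
      mul_ite, ite_mul, mul_one, mul_zero, one_mul, zero_mul, Finset.sum_ite_eq,
      Finset.sum_ite_eq', Finset.mem_univ, if_true, ite_and, pushlt, pushne]
    split_ifs <;> simp_all <;> omega
end
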